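/- Let ℍ^+ = {ξ ∈ ℝ^{2n+1} : ⟨ξ, ν⟩ > d} be a half-space, δ(ξ) = ⟨ξ, ν⟩ − d, and W(ξ)² = Σ_{i=1}^n (ν_{x,i} + 2y_i ν_t)² + (ν_{y,i} − 2x_i ν_t)². Then for every p > 1 and every u ∈ C_0^∞(ℍ^+), ∫_{ℍ^+} |∇_H u|^p dξ ≥ ((p-1)/p)^p ∫_{ℍ^+} (W(ξ)^p / δ(ξ)^p) |u|^p dξ, where ∇_H u = (X_1 u, …, X_n u, Y_1 u, …, Y_n u) with X_i = ∂/∂x_i + 2y_i ∂/∂t, Y_i = ∂/∂y_i − 2x_i ∂/∂t. -/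

import Mathlib

open MeasureTheory Real Filter Topology

noncomputable section

abbrev H (n : ℕ) := (Fin n → ℝ) × (Fin n → ℝ) × ℝ

/-- Coefficient vector of the left-invariant field `X_i` at `ξ`. -/
def Xv (n : ℕ) (i : Fin n) (ξ : H n) : H n := (Pi.single i 1, 0, 2 * ξ.2.1 i)

/-- Coefficient vector of the left-invariant field `Y_i` at `ξ`. -/
def Yv (n : ℕ) (i : Fin n) (ξ : H n) : H n := (0, Pi.single i 1, -(2 * ξ.1 i))

/-- The derivative `X_i f`. -/
def XD (n : ℕ) (i : Fin n) (f : H n → ℝ) (ξ : H n) : ℝ := fderiv ℝ f ξ (Xv n i ξ)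

/-- The derivative `Y_i f`. -/
def YD (n : ℕ) (i : Fin n) (f : H n → ℝ) (ξ : H n) : ℝ := fderiv ℝ f ξ (Yv n i ξ)

/-- Euclidean norm of the horizontal gradient. -/
def hNorm (n : ℕ) (f : H n → ℝ) (ξ : H n) : ℝ :=
  Real.sqrt (∑ i, ((XD n i f ξ) ^ 2 + (YD n i f ξ) ^ 2))

/-- Euclidean inner product on `ℝ^{2n+1}`. -/
def iprod (n : ℕ) (a b : H n) : ℝ :=
  (∑ i, a.1 i * b.1 i) + (∑ i, a.2.1 i * b.2.1 i) + a.2.2 * b.2.2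

namespace GHH

variable {n : ℕ}

instance haar2 (n : ℕ) : ((volume : Measure ((Fin n → ℝ) × ℝ))).IsAddHaarMeasure :=
  Measure.prod.instIsAddHaarMeasure _ _

instance haar3 (n : ℕ) : ((volume : Measure (H n))).IsAddHaarMeasure :=
  Measure.prod.instIsAddHaarMeasure _ _

/-! ### Basic functions -/

def del (ν : H n) (d : ℝ) (ξ : H n) : ℝ := iprod n ξ ν - d
def Av (ν : H n) (i : Fin n) (ξ : H n) : ℝ := ν.1 i + 2 * ξ.2.1 i * ν.2.2
def Bv (ν : H n) (i : Fin n) (ξ : H n) : ℝ := ν.2.1 i - 2 * ξ.1 i * ν.2.2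
def W2 (ν : H n) (ξ : H n) : ℝ := ∑ i, (Av ν i ξ ^ 2 + Bv ν i ξ ^ 2)
def Zc (ν : H n) (ξ : H n) : ℝ := ∑ i, (2 * ξ.2.1 i * Av ν i ξ - 2 * ξ.1 i * Bv ν i ξ)
def Zw (ν : H n) (ξ : H n) : H n := (fun i => Av ν i ξ, fun i => Bv ν i ξ, Zc ν ξ)
def ex (i : Fin n) : H n := (Pi.single i 1, 0, 0)
def ey (i : Fin n) : H n := (0, Pi.single i 1, 0)
def et : H n := ((0 : Fin n → ℝ), (0 : Fin n → ℝ), (1 : ℝ))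

/-! ### Continuous linear maps -/

def cx (i : Fin n) : H n →L[ℝ] ℝ :=
  (ContinuousLinearMap.proj i).comp (ContinuousLinearMap.fst ℝ (Fin n → ℝ) ((Fin n → ℝ) × ℝ))
def cy (i : Fin n) : H n →L[ℝ] ℝ :=
  ((ContinuousLinearMap.proj i).comp (ContinuousLinearMap.fst ℝ (Fin n → ℝ) ℝ)).comp
    (ContinuousLinearMap.snd ℝ (Fin n → ℝ) ((Fin n → ℝ) × ℝ))
def ct : H n →L[ℝ] ℝ :=
  (ContinuousLinearMap.snd ℝ (Fin n → ℝ) ℝ).comp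
    (ContinuousLinearMap.snd ℝ (Fin n → ℝ) ((Fin n → ℝ) × ℝ))

@[simp] lemma cx_apply (i : Fin n) (ξ : H n) : cx i ξ = ξ.1 i := rfl
@[simp] lemma cy_apply (i : Fin n) (ξ : H n) : cy i ξ = ξ.2.1 i := rfl
@[simp] lemma ct_apply (ξ : H n) : ct ξ = ξ.2.2 := rfl

def LA (ν : H n) (i : Fin n) : H n →L[ℝ] ℝ := (2 * ν.2.2) • cy i
def LB (ν : H n) (i : Fin n) : H n →L[ℝ] ℝ := (-(2 * ν.2.2)) • cx i
def Ld (ν : H n) : H n →L[ℝ] ℝ :=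
  (∑ i, ν.1 i • cx i) + (∑ i, ν.2.1 i • cy i) + ν.2.2 • ct

@[simp] lemma LA_apply (ν : H n) (i : Fin n) (v : H n) : LA ν i v = 2 * ν.2.2 * v.2.1 i := rfl
@[simp] lemma LB_apply (ν : H n) (i : Fin n) (v : H n) : LB ν i v = -(2 * ν.2.2) * v.1 i := rfl

lemma Ld_apply (ν : H n) (v : H n) : Ld ν v = iprod n v ν := by
  simp [Ld, iprod, ContinuousLinearMap.sum_apply, mul_comm]

/-! ### Derivatives of the basic functions -/

lemma hasF_Av (ν : H n) (i : Fin n) (ξ : H n) : HasFDerivAt (Av ν i) (LA ν i) ξ := by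
  have h : HasFDerivAt (fun ξ : H n => ξ.2.1 i) (cy i) ξ := (cy i).hasFDerivAt
  have hh := ((h.const_mul (2:ℝ)).mul_const ν.2.2).const_add (ν.1 i)
  have he : LA ν i = ν.2.2 • (2:ℝ) • cy i := by rw [LA, smul_smul, mul_comm]
  rw [show Av ν i = fun ξ : H n => ν.1 i + 2 * ξ.2.1 i * ν.2.2 from rfl, he]
  exact hh

lemma hasF_Bv (ν : H n) (i : Fin n) (ξ : H n) : HasFDerivAt (Bv ν i) (LB ν i) ξ := by
  have h : HasFDerivAt (fun ξ : H n => ξ.1 i) (cx i) ξ := (cx i).hasFDerivAt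
  have hh := ((h.const_mul (2:ℝ)).mul_const ν.2.2).const_sub (ν.2.1 i)
  have he : LB ν i = -(ν.2.2 • (2:ℝ) • cx i) := by
    rw [LB]; module
  rw [show Bv ν i = fun ξ : H n => ν.2.1 i - 2 * ξ.1 i * ν.2.2 from rfl, he]
  exact hh

lemma hasF_del (ν : H n) (d : ℝ) (ξ : H n) : HasFDerivAt (del ν d) (Ld ν) ξ := by
  have h : HasFDerivAt (fun ξ : H n => Ld ν ξ - d) (Ld ν) ξ := (Ld ν).hasFDerivAt.sub_const d
  have he : del ν d = fun ξ : H n => Ld ν ξ - d := funext fun ξ => by rw [del, Ld_apply]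
  rw [he]; exact h

def LW (ν : H n) (ξ : H n) : H n →L[ℝ] ℝ :=
  ∑ i, ((Av ν i ξ • LA ν i + Av ν i ξ • LA ν i) + (Bv ν i ξ • LB ν i + Bv ν i ξ • LB ν i))

lemma hasF_W2 (ν : H n) (ξ : H n) : HasFDerivAt (W2 ν) (LW ν ξ) ξ := by
  have he : W2 ν = fun ξ => ∑ i, (Av ν i ξ * Av ν i ξ + Bv ν i ξ * Bv ν i ξ) := by
    funext ξ; rw [W2]; exact Finset.sum_congr rfl fun i _ => by ring
  rw [he]
  exact HasFDerivAt.fun_sum fun i _ =>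
    ((hasF_Av ν i ξ).mul (hasF_Av ν i ξ)).add ((hasF_Bv ν i ξ).mul (hasF_Bv ν i ξ))

def LZ (ν : H n) (ξ : H n) : H n →L[ℝ] ℝ :=
  ∑ i, (((2 * ξ.2.1 i) • LA ν i + Av ν i ξ • ((2:ℝ) • cy i)) -
        ((2 * ξ.1 i) • LB ν i + Bv ν i ξ • ((2:ℝ) • cx i)))

lemma hasF_Zc (ν : H n) (ξ : H n) : HasFDerivAt (Zc ν) (LZ ν ξ) ξ := by
  rw [show Zc ν = fun ξ => ∑ i, (2 * ξ.2.1 i * Av ν i ξ - 2 * ξ.1 i * Bv ν i ξ) from rfl]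
  exact HasFDerivAt.fun_sum fun i _ =>
    ((((cy i).hasFDerivAt (x := ξ)).const_mul (2:ℝ)).mul (hasF_Av ν i ξ)).sub
      ((((cx i).hasFDerivAt (x := ξ)).const_mul (2:ℝ)).mul (hasF_Bv ν i ξ))

lemma Ld_Zw (ν : H n) (ξ : H n) : Ld ν (Zw ν ξ) = W2 ν ξ := by
  simp only [Ld_apply, Zw, iprod, W2, Zc]
  rw [Finset.sum_mul, ← Finset.sum_add_distrib, ← Finset.sum_add_distrib]
  exact Finset.sum_congr rfl fun i _ => by simp only [Av, Bv]; ring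

lemma LW_Zw (ν : H n) (ξ : H n) : LW ν ξ (Zw ν ξ) = 0 := by
  simp only [LW, ContinuousLinearMap.sum_apply, ContinuousLinearMap.add_apply,
    ContinuousLinearMap.smul_apply, LA_apply, LB_apply, Zw, smul_eq_mul]
  exact Finset.sum_eq_zero fun i _ => by ring

lemma LZ_et (ν : H n) (ξ : H n) : LZ ν ξ et = 0 := by
  simp [LZ, et, ContinuousLinearMap.sum_apply]

lemma Zw_decomp1 (ν : H n) (ξ : H n) :
    Zw ν ξ = ∑ i, (Av ν i ξ • Xv n i ξ + Bv ν i ξ • Yv n i ξ) := by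
  refine Prod.ext ?_ (Prod.ext ?_ ?_)
  · rw [Prod.fst_sum]
    funext j
    simp [Zw, Xv, Yv, Finset.sum_apply, Pi.single_apply, mul_comm]
  · rw [Prod.snd_sum, Prod.fst_sum]
    funext j
    simp [Zw, Xv, Yv, Finset.sum_apply, Pi.single_apply, mul_comm]
  · rw [Prod.snd_sum, Prod.snd_sum]
    simp only [Zw, Zc, Xv, Yv, Prod.snd_sum]
    exact Finset.sum_congr rfl fun i _ => by simp; ring

lemma Zw_decomp2 (ν : H n) (ξ : H n) :
    Zw ν ξ = (∑ i, Av ν i ξ • ex i) + (∑ i, Bv ν i ξ • ey i) + Zc ν ξ • et := by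
  refine Prod.ext ?_ (Prod.ext ?_ ?_)
  · simp only [Prod.fst_add, Prod.fst_sum]
    funext j
    simp [Zw, ex, ey, et, Finset.sum_apply, Pi.single_apply, mul_comm]
  · simp only [Prod.snd_add, Prod.fst_add, Prod.snd_sum, Prod.fst_sum]
    funext j
    simp [Zw, ex, ey, et, Finset.sum_apply, Pi.single_apply, mul_comm]
  · simp only [Prod.snd_add, Prod.snd_sum]
    simp [ex, ey, et, Zw]


lemma clm_Zw_XY (ν : H n) (ξ : H n) (L : H n →L[ℝ] ℝ) :
    L (Zw ν ξ) = ∑ i, (Av ν i ξ * L (Xv n i ξ) + Bv ν i ξ * L (Yv n i ξ)) := by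
  rw [Zw_decomp1 ν ξ, map_sum]
  simp

lemma clm_Zw_coords (ν : H n) (ξ : H n) (L : H n →L[ℝ] ℝ) :
    L (Zw ν ξ) = (∑ i, Av ν i ξ * L (ex i)) + (∑ i, Bv ν i ξ * L (ey i)) + Zc ν ξ * L et := by
  rw [Zw_decomp2 ν ξ]
  simp

/-! ### One-dimensional lemmas about `|t| ^ p` -/

lemma hasDerivAt_absp {p : ℝ} (hp : 1 < p) (t : ℝ) :
    HasDerivAt (fun s : ℝ => |s| ^ p) (p * t * |t| ^ (p - 2)) t := by
  rcases lt_trichotomy t 0 with ht | rfl | ht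
  · have h1 : HasDerivAt (fun s : ℝ => -s) (-1) t := (hasDerivAt_id t).neg
    have h2 : HasDerivAt (fun x : ℝ => x ^ p) (p * (-t) ^ (p - 1)) (-t) :=
      Real.hasDerivAt_rpow_const (Or.inl (ne_of_gt (neg_pos.2 ht)))
    have h3 := h2.comp t h1
    have h4 : (fun s : ℝ => |s| ^ p) =ᶠ[nhds t] ((fun x : ℝ => x ^ p) ∘ fun s => -s) := by
      filter_upwards [Iio_mem_nhds ht] with s hs
      simp [abs_of_neg (Set.mem_Iio.1 hs)]
    have h5 := h3.congr_of_eventuallyEq h4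
    refine h5.congr_deriv ?_
    rw [abs_of_neg ht, show p - 1 = (p - 2) + 1 by ring, Real.rpow_add (neg_pos.2 ht),
      Real.rpow_one]
    ring
  · have key : HasDerivAt (fun s : ℝ => |s| ^ p) 0 0 := by
      rw [hasDerivAt_iff_tendsto_slope]
      have hb : ∀ s : ℝ, ‖slope (fun s : ℝ => |s| ^ p) 0 s‖ ≤ |s| ^ (p - 1) := by
        intro s
        rcases eq_or_ne s 0 with rfl | hs
        · simp only [slope_same, norm_zero]
          exact Real.rpow_nonneg (abs_nonneg 0) _
        · have h2 : |s| ^ (p - 1) = |s| ^ p / |s| := by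
            rw [Real.rpow_sub (abs_pos.2 hs), Real.rpow_one]
          rw [slope_def_field, abs_zero, Real.zero_rpow (by positivity : p ≠ 0), sub_zero,
            sub_zero, Real.norm_eq_abs, abs_div,
            abs_of_nonneg (Real.rpow_nonneg (abs_nonneg s) p), h2]
      have htend : Tendsto (fun s : ℝ => |s| ^ (p - 1)) (nhdsWithin 0 {(0:ℝ)}ᶜ) (nhds 0) := by
        have hca : ContinuousAt (fun s : ℝ => |s| ^ (p - 1)) 0 :=
          continuous_abs.continuousAt.rpow_const (Or.inr (by linarith))
        have := hca.tendsto.mono_left (nhdsWithin_le_nhds (s := {(0:ℝ)}ᶜ))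
        simpa [Real.zero_rpow (ne_of_gt (by linarith : (0:ℝ) < p - 1))] using this
      exact squeeze_zero_norm hb htend
    simpa using key
  · have h2 : HasDerivAt (fun x : ℝ => x ^ p) (p * t ^ (p - 1)) t :=
      Real.hasDerivAt_rpow_const (Or.inl (ne_of_gt ht))
    have h4 : (fun s : ℝ => |s| ^ p) =ᶠ[nhds t] (fun x : ℝ => x ^ p) := by
      filter_upwards [Ioi_mem_nhds ht] with s hs
      simp [abs_of_pos (Set.mem_Ioi.1 hs)]
    have h5 := h2.congr_of_eventuallyEq h4
    refine h5.congr_deriv ?_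
    rw [abs_of_pos ht, show p - 1 = (p - 2) + 1 by ring, Real.rpow_add ht, Real.rpow_one]
    ring

lemma abs_absp_deriv {p : ℝ} (hp : 1 < p) (t : ℝ) :
    |p * t * |t| ^ (p - 2)| = p * |t| ^ (p - 1) := by
  rcases eq_or_ne t 0 with rfl | ht
  · simp [Real.zero_rpow (by intro h; linarith [h] : p - 1 ≠ 0)]
  · have h1 : (0:ℝ) < |t| := abs_pos.2 ht
    rw [abs_mul, abs_mul, abs_of_pos (by linarith : (0:ℝ) < p),
      abs_of_nonneg (Real.rpow_nonneg (abs_nonneg t) _),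
      show p - 1 = 1 + (p - 2) by ring, Real.rpow_add h1, Real.rpow_one]
    ring

lemma cont_absp_deriv {p : ℝ} (hp : 1 < p) :
    Continuous (fun t : ℝ => p * t * |t| ^ (p - 2)) := by
  rw [continuous_iff_continuousAt]
  intro t
  rcases eq_or_ne t 0 with rfl | ht
  · have hb : ∀ s : ℝ, ‖p * s * |s| ^ (p - 2)‖ ≤ p * |s| ^ (p - 1) :=
      fun s => le_of_eq (abs_absp_deriv hp s)
    have htend : Tendsto (fun s : ℝ => p * |s| ^ (p - 1)) (nhds 0) (nhds 0) := by
      have hca : ContinuousAt (fun s : ℝ => |s| ^ (p - 1)) 0 :=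
        continuous_abs.continuousAt.rpow_const (Or.inr (by linarith))
      have := hca.tendsto.const_mul p
      simpa [Real.zero_rpow (ne_of_gt (by linarith : (0:ℝ) < p - 1)), mul_zero] using this
    have := squeeze_zero_norm hb htend
    unfold ContinuousAt
    simpa using this
  · exact ((continuousAt_const.mul continuousAt_id).mul
      (continuous_abs.continuousAt.rpow_const (Or.inl (abs_ne_zero.2 ht))))

lemma contDiff_absp {p : ℝ} (hp : 1 < p) : ContDiff ℝ 1 (fun s : ℝ => |s| ^ p) := by
  rw [contDiff_one_iff_deriv]
  refine ⟨fun t => (hasDerivAt_absp hp t).differentiableAt, ?_⟩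
  have hd : deriv (fun s : ℝ => |s| ^ p) = fun t => p * t * |t| ^ (p - 2) :=
    funext fun t => (hasDerivAt_absp hp t).deriv
  rw [hd]
  exact cont_absp_deriv hp

/-! ### Continuity of the basic functions -/

lemma cont_Av (ν : H n) (i : Fin n) : Continuous (Av ν i) := (hasF_Av ν i · |>.continuousAt) |> continuous_iff_continuousAt.2
lemma cont_Bv (ν : H n) (i : Fin n) : Continuous (Bv ν i) := (hasF_Bv ν i · |>.continuousAt) |> continuous_iff_continuousAt.2
lemma cont_del (ν : H n) (d : ℝ) : Continuous (del ν d) := (hasF_del ν d · |>.continuousAt) |> continuous_iff_continuousAt.2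
lemma cont_W2 (ν : H n) : Continuous (W2 ν) := (hasF_W2 ν · |>.continuousAt) |> continuous_iff_continuousAt.2
lemma cont_Zc (ν : H n) : Continuous (Zc ν) := (hasF_Zc ν · |>.continuousAt) |> continuous_iff_continuousAt.2
lemma cont_Zw (ν : H n) : Continuous (Zw ν) := by
  refine Continuous.prodMk ?_ (Continuous.prodMk ?_ (cont_Zc ν)) <;>
    exact continuous_pi fun i => by first | exact cont_Av ν i | exact cont_Bv ν i

lemma W2_nonneg (ν : H n) (ξ : H n) : 0 ≤ W2 ν ξ :=
  Finset.sum_nonneg fun i _ => by positivity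

/-! ### The functions of the main argument -/

def th (ν : H n) (p ε : ℝ) (ξ : H n) : ℝ := (W2 ν ξ + ε) ^ ((p - 2) / 2)
def Du (p : ℝ) (u : H n → ℝ) (ξ : H n) : ℝ := p * u ξ * |u ξ| ^ (p - 2)
def Zu (ν : H n) (u : H n → ℝ) (ξ : H n) : ℝ := fderiv ℝ u ξ (Zw ν ξ)
def ph (ν : H n) (d p : ℝ) (u : H n → ℝ) (ε : ℝ) (ξ : H n) : ℝ :=
  th ν p ε ξ * (del ν d ξ ^ (1 - p) * |u ξ| ^ p)
def O1 (ν : H n) (d p : ℝ) (u : H n → ℝ) (ε : ℝ) (ξ : H n) : ℝ :=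
  th ν p ε ξ * (del ν d ξ ^ (-p) * W2 ν ξ * |u ξ| ^ p)
def O2 (ν : H n) (d p : ℝ) (u : H n → ℝ) (ε : ℝ) (ξ : H n) : ℝ :=
  th ν p ε ξ * (del ν d ξ ^ (1 - p) * (Du p u ξ * Zu ν u ξ))
def FF (ν : H n) (d p : ℝ) (u : H n → ℝ) (ε : ℝ) (ξ : H n) : ℝ :=
  th ν p ε ξ * del ν d ξ ^ (1 - p) * |u ξ| ^ (p - 1) * Real.sqrt (W2 ν ξ)
def TT (ν : H n) (d p : ℝ) (u : H n → ℝ) (ξ : H n) : ℝ :=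
  Real.sqrt (W2 ν ξ) ^ p / del ν d ξ ^ p * |u ξ| ^ p

/-! ### Support and vanishing helpers -/

lemma del_pos_of_mem {ν : H n} {d : ℝ} {u : H n → ℝ}
    (hsupp : tsupport u ⊆ {ξ : H n | d < iprod n ξ ν}) {ξ : H n} (h : ξ ∈ tsupport u) :
    0 < del ν d ξ := sub_pos.2 (hsupp h)

lemma u_eq_zero {u : H n → ℝ} {ξ : H n} (h : ξ ∉ tsupport u) : u ξ = 0 :=
  image_eq_zero_of_notMem_tsupport h

lemma cps_of_vanishing {u : H n → ℝ} (hcu : HasCompactSupport u) {h : H n → ℝ}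
    (h0 : ∀ ξ, ξ ∉ tsupport u → h ξ = 0) : HasCompactSupport h :=
  IsCompact.of_isClosed_subset hcu (isClosed_tsupport h)
    (closure_minimal (fun ξ hξ => by
      by_contra hn
      exact (Function.mem_support.1 hξ) (h0 ξ hn)) (isClosed_tsupport u))

lemma cont_of_vanishing {ν : H n} {d : ℝ} {u : H n → ℝ}
    (hsupp : tsupport u ⊆ {ξ : H n | d < iprod n ξ ν}) {h : H n → ℝ}
    (h0 : ∀ ξ, ξ ∉ tsupport u → h ξ = 0)
    (hcont : ∀ ξ, 0 < del ν d ξ → ContinuousAt h ξ) : Continuous h := by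
  rw [continuous_iff_continuousAt]
  intro ξ
  by_cases hδ : 0 < del ν d ξ
  · exact hcont ξ hδ
  · have hξ : ξ ∉ tsupport u := fun hm => hδ (del_pos_of_mem hsupp hm)
    have hev : (fun _ : H n => (0:ℝ)) =ᶠ[nhds ξ] h := by
      filter_upwards [(isClosed_tsupport u).isOpen_compl.mem_nhds hξ] with η hη
      exact (h0 η hη).symm
    exact ContinuousAt.congr continuousAt_const hev

lemma integrable_of_vanishing {ν : H n} {d : ℝ} {u : H n → ℝ}
    (hcu : HasCompactSupport u)
    (hsupp : tsupport u ⊆ {ξ : H n | d < iprod n ξ ν}) {h : H n → ℝ}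
    (h0 : ∀ ξ, ξ ∉ tsupport u → h ξ = 0)
    (hcont : ∀ ξ, 0 < del ν d ξ → ContinuousAt h ξ) : Integrable h :=
  (cont_of_vanishing hsupp h0 hcont).integrable_of_hasCompactSupport
    (cps_of_vanishing hcu h0)

/-! ### Continuity facts -/

lemma cont_th {ν : H n} {p ε : ℝ} (hε : 0 < ε) : Continuous (th ν p ε) :=
  ((cont_W2 ν).add continuous_const).rpow_const fun ξ =>
    Or.inl (ne_of_gt (by have := W2_nonneg ν ξ; show 0 < W2 ν ξ + ε; linarith))

lemma th_pos {ν : H n} {p ε : ℝ} (hε : 0 < ε) (ξ : H n) : 0 < th ν p ε ξ :=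
  Real.rpow_pos_of_pos (by have := W2_nonneg ν ξ; linarith) _

lemma cont_absu_rpow {u : H n → ℝ} (hu : ContDiff ℝ (⊤ : ℕ∞) u) {r : ℝ} (hr : 0 ≤ r) :
    Continuous fun ξ => |u ξ| ^ r :=
  (continuous_abs.comp hu.continuous).rpow_const fun _ => Or.inr hr

lemma cont_Du {p : ℝ} (hp : 1 < p) {u : H n → ℝ} (hu : ContDiff ℝ (⊤ : ℕ∞) u) :
    Continuous (Du p u) :=
  (cont_absp_deriv hp).comp hu.continuous

lemma cont_Zu {ν : H n} {u : H n → ℝ} (hu : ContDiff ℝ (⊤ : ℕ∞) u) : Continuous (Zu ν u) :=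
  (hu.continuous_fderiv (by simp)).clm_apply (cont_Zw ν)

lemma cont_XD {u : H n → ℝ} (hu : ContDiff ℝ (⊤ : ℕ∞) u) (i : Fin n) : Continuous (XD n i u) := by
  refine (hu.continuous_fderiv (by simp)).clm_apply ?_
  refine Continuous.prodMk continuous_const (Continuous.prodMk continuous_const ?_)
  exact continuous_const.mul ((cy i).continuous)

lemma cont_YD {u : H n → ℝ} (hu : ContDiff ℝ (⊤ : ℕ∞) u) (i : Fin n) : Continuous (YD n i u) := by
  refine (hu.continuous_fderiv (by simp)).clm_apply ?_
  refine Continuous.prodMk continuous_const (Continuous.prodMk continuous_const ?_)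
  exact (continuous_const.mul ((cx i).continuous)).neg

lemma cont_hNorm {u : H n → ℝ} (hu : ContDiff ℝ (⊤ : ℕ∞) u) : Continuous (hNorm n u) := by
  refine Real.continuous_sqrt.comp ?_
  exact continuous_finset_sum _ fun i _ => ((cont_XD hu i).pow 2).add ((cont_YD hu i).pow 2)

lemma fderiv_u_zero {u : H n → ℝ} {ξ : H n} (h : ξ ∉ tsupport u) : fderiv ℝ u ξ = 0 := by
  by_contra hn
  exact h (support_fderiv_subset ℝ (Function.mem_support.2 hn))

lemma hNorm_zero {u : H n → ℝ} {ξ : H n} (h : ξ ∉ tsupport u) : hNorm n u ξ = 0 := by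
  simp [hNorm, XD, YD, fderiv_u_zero h]

lemma hNorm_nonneg (u : H n → ℝ) (ξ : H n) : 0 ≤ hNorm n u ξ := Real.sqrt_nonneg _

/-! ### Smoothness facts -/

lemma contDiff_Av (ν : H n) (i : Fin n) : ContDiff ℝ 1 (Av ν i) :=
  contDiff_const.add ((contDiff_const.mul (cy i).contDiff).mul contDiff_const)

lemma contDiff_Bv (ν : H n) (i : Fin n) : ContDiff ℝ 1 (Bv ν i) :=
  contDiff_const.sub ((contDiff_const.mul (cx i).contDiff).mul contDiff_const)

lemma contDiff_Zc (ν : H n) : ContDiff ℝ 1 (Zc ν) :=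
  ContDiff.sum fun i _ =>
    ((contDiff_const.mul (cy i).contDiff).mul (contDiff_Av ν i)).sub
      ((contDiff_const.mul (cx i).contDiff).mul (contDiff_Bv ν i))

lemma contDiff_W2' (ν : H n) : ContDiff ℝ 1 (W2 ν) :=
  ContDiff.sum fun i _ => ((contDiff_Av ν i).pow 2).add ((contDiff_Bv ν i).pow 2)

lemma contDiff_del (ν : H n) (d : ℝ) : ContDiff ℝ 1 (del ν d) := by
  have he : del ν d = fun ξ : H n => Ld ν ξ - d := funext fun ξ => by rw [del, Ld_apply]
  rw [he]
  exact (Ld ν).contDiff.sub contDiff_const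

lemma contDiffAt_ph {ν : H n} {d p ε : ℝ} {u : H n → ℝ} (hp : 1 < p)
    (hu : ContDiff ℝ (⊤ : ℕ∞) u)
    (hsupp : tsupport u ⊆ {ξ : H n | d < iprod n ξ ν}) (hε : 0 < ε) (ξ : H n) :
    ContDiffAt ℝ 1 (ph ν d p u ε) ξ := by
  by_cases hδ : 0 < del ν d ξ
  · have h1 : ContDiffAt ℝ 1 (th ν p ε) ξ :=
      (((contDiff_W2' ν).add contDiff_const).contDiffAt).rpow_const_of_ne
        (ne_of_gt (by have := W2_nonneg ν ξ; linarith))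
    have h2 : ContDiffAt ℝ 1 (fun ξ => del ν d ξ ^ (1 - p)) ξ :=
      ((contDiff_del ν d).contDiffAt).rpow_const_of_ne (ne_of_gt hδ)
    have h3 : ContDiffAt ℝ 1 (fun ξ => |u ξ| ^ p) ξ :=
      ((contDiff_absp hp).comp (hu.of_le (by simp))).contDiffAt
    exact h1.mul (h2.mul h3)
  · have hξ : ξ ∉ tsupport u := fun hm => hδ (del_pos_of_mem hsupp hm)
    have hev : (fun _ : H n => (0:ℝ)) =ᶠ[nhds ξ] ph ν d p u ε := by
      filter_upwards [(isClosed_tsupport u).isOpen_compl.mem_nhds hξ] with η hη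
      simp [ph, u_eq_zero hη, Real.zero_rpow (by positivity : p ≠ 0)]
    exact contDiffAt_const.congr_of_eventuallyEq hev.symm

lemma contDiff_ph {ν : H n} {d p ε : ℝ} {u : H n → ℝ} (hp : 1 < p)
    (hu : ContDiff ℝ (⊤ : ℕ∞) u)
    (hsupp : tsupport u ⊆ {ξ : H n | d < iprod n ξ ν}) (hε : 0 < ε) :
    ContDiff ℝ 1 (ph ν d p u ε) :=
  contDiff_iff_contDiffAt.2 (contDiffAt_ph hp hu hsupp hε)

lemma ph_zero {ν : H n} {d p ε : ℝ} {u : H n → ℝ} (hp : 1 < p) {ξ : H n}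
    (h : ξ ∉ tsupport u) : ph ν d p u ε ξ = 0 := by
  simp [ph, u_eq_zero h, Real.zero_rpow (by positivity : p ≠ 0)]

lemma hcs_ph {ν : H n} {d p ε : ℝ} {u : H n → ℝ} (hp : 1 < p)
    (hcu : HasCompactSupport u) : HasCompactSupport (ph ν d p u ε) :=
  cps_of_vanishing hcu fun _ h => ph_zero hp h

/-! ### Pointwise derivative identities -/

lemma fderiv_ph_Zw {ν : H n} {d p ε : ℝ} {u : H n → ℝ} (hp : 1 < p)
    (hu : ContDiff ℝ (⊤ : ℕ∞) u)
    (hsupp : tsupport u ⊆ {ξ : H n | d < iprod n ξ ν}) (hε : 0 < ε) (ξ : H n) :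
    fderiv ℝ (ph ν d p u ε) ξ (Zw ν ξ) = (1 - p) * O1 ν d p u ε ξ + O2 ν d p u ε ξ := by
  by_cases hδ : 0 < del ν d ξ
  · have hWpos : (0:ℝ) < W2 ν ξ + ε := by have := W2_nonneg ν ξ; linarith
    have hth : HasFDerivAt (th ν p ε)
        (((p - 2) / 2 * (W2 ν ξ + ε) ^ ((p - 2) / 2 - 1)) • LW ν ξ) ξ :=
      by have := (Real.hasDerivAt_rpow_const (p := (p - 2) / 2)
            (Or.inl (ne_of_gt hWpos))).comp_hasFDerivAt ξ ((hasF_W2 ν ξ).add_const ε)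
         exact this
    have hdl : HasFDerivAt (fun ξ => del ν d ξ ^ (1 - p))
        (((1 - p) * del ν d ξ ^ (1 - p - 1)) • Ld ν) ξ :=
      (Real.hasDerivAt_rpow_const (p := 1 - p)
        (Or.inl (ne_of_gt hδ))).comp_hasFDerivAt ξ (hasF_del ν d ξ)
    have hgg : HasFDerivAt (fun ξ => |u ξ| ^ p)
        ((p * u ξ * |u ξ| ^ (p - 2)) • fderiv ℝ u ξ) ξ :=
      (hasDerivAt_absp hp (u ξ)).comp_hasFDerivAt ξ ((hu.differentiable (by simp)) ξ).hasFDerivAt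
    have hphi := hth.fun_mul (hdl.fun_mul hgg)
    rw [show ph ν d p u ε = (fun y => th ν p ε y * (del ν d y ^ (1 - p) * |u y| ^ p)) from rfl,
      hphi.fderiv]
    simp only [ContinuousLinearMap.add_apply, ContinuousLinearMap.smul_apply, smul_eq_mul,
      LW_Zw, Ld_Zw, mul_zero]
    rw [show (1 : ℝ) - p - 1 = -p by ring]
    simp only [O1, O2, Du, Zu]
    ring
  · have hξ : ξ ∉ tsupport u := fun hm => hδ (del_pos_of_mem hsupp hm)
    have hev : ph ν d p u ε =ᶠ[nhds ξ] (fun _ : H n => (0:ℝ)) := by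
      filter_upwards [(isClosed_tsupport u).isOpen_compl.mem_nhds hξ] with η hη
      exact ph_zero hp hη
    rw [hev.fderiv_eq]
    have hu0 : u ξ = 0 := u_eq_zero hξ
    simp [O1, O2, Du, hu0, Real.zero_rpow (by positivity : p ≠ 0)]

lemma div_identity {ν : H n} {d p ε : ℝ} {u : H n → ℝ} (hp : 1 < p)
    (hu : ContDiff ℝ (⊤ : ℕ∞) u)
    (hsupp : tsupport u ⊆ {ξ : H n | d < iprod n ξ ν}) (hε : 0 < ε) (ξ : H n) :
    (∑ i, fderiv ℝ (fun η => Av ν i η * ph ν d p u ε η) ξ (ex i)) +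
      (∑ i, fderiv ℝ (fun η => Bv ν i η * ph ν d p u ε η) ξ (ey i)) +
      fderiv ℝ (fun η => Zc ν η * ph ν d p u ε η) ξ et =
      fderiv ℝ (ph ν d p u ε) ξ (Zw ν ξ) := by
  have hphD : DifferentiableAt ℝ (ph ν d p u ε) ξ :=
    (contDiffAt_ph hp hu hsupp hε ξ).differentiableAt one_ne_zero
  have hP : ∀ i : Fin n, fderiv ℝ (fun η => Av ν i η * ph ν d p u ε η) ξ (ex i) =
      Av ν i ξ * fderiv ℝ (ph ν d p u ε) ξ (ex i) := by
    intro i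
    rw [fderiv_fun_mul (hasF_Av ν i ξ).differentiableAt hphD, (hasF_Av ν i ξ).fderiv]
    simp [ex]
  have hQ : ∀ i : Fin n, fderiv ℝ (fun η => Bv ν i η * ph ν d p u ε η) ξ (ey i) =
      Bv ν i ξ * fderiv ℝ (ph ν d p u ε) ξ (ey i) := by
    intro i
    rw [fderiv_fun_mul (hasF_Bv ν i ξ).differentiableAt hphD, (hasF_Bv ν i ξ).fderiv]
    simp [ey]
  have hR : fderiv ℝ (fun η => Zc ν η * ph ν d p u ε η) ξ et =
      Zc ν ξ * fderiv ℝ (ph ν d p u ε) ξ et := by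
    rw [fderiv_fun_mul (hasF_Zc ν ξ).differentiableAt hphD, (hasF_Zc ν ξ).fderiv]
    simp [LZ_et ν ξ]
  simp only [hP, hQ, hR]
  exact (clm_Zw_coords ν ξ (fderiv ℝ (ph ν d p u ε) ξ)).symm

/-! ### Integration by parts -/

lemma fd_integrable {F : H n → ℝ} (h1 : ContDiff ℝ 1 F) (h2 : HasCompactSupport F)
    (v : H n) : Integrable (fun ξ => fderiv ℝ F ξ v) := by
  have hco : Continuous fun ξ => fderiv ℝ F ξ v :=
    (h1.continuous_fderiv one_ne_zero).clm_apply continuous_const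
  have hcs : HasCompactSupport fun ξ => fderiv ℝ F ξ v :=
    (h2.fderiv ℝ).comp_left (g := fun L : H n →L[ℝ] ℝ => L v) rfl
  exact hco.integrable_of_hasCompactSupport hcs

lemma ibp {F : H n → ℝ} (h1 : ContDiff ℝ 1 F) (h2 : HasCompactSupport F) (v : H n) :
    ∫ ξ, fderiv ℝ F ξ v = 0 := by
  have hd : Differentiable ℝ F := h1.differentiable one_ne_zero
  have hint := fd_integrable h1 h2 v
  have hFint : Integrable F := h1.continuous.integrable_of_hasCompactSupport h2
  have key := integral_mul_fderiv_eq_neg_fderiv_mul_of_integrable (μ := volume)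
    (f := F) (g := fun _ => (1:ℝ)) (v := v)
    (by simpa using hint) (by simpa using (integrable_zero (H n) ℝ volume))
    (by simpa using hFint) (fun x _ => hd x) (fun x _ => differentiableAt_const (1:ℝ))
  simpa using key.symm

lemma int_fderiv_ph_Zw_zero {ν : H n} {d p ε : ℝ} {u : H n → ℝ} (hp : 1 < p)
    (hu : ContDiff ℝ (⊤ : ℕ∞) u) (hcu : HasCompactSupport u)
    (hsupp : tsupport u ⊆ {ξ : H n | d < iprod n ξ ν}) (hε : 0 < ε) :
    ∫ ξ, fderiv ℝ (ph ν d p u ε) ξ (Zw ν ξ) = 0 := by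
  have hph1 := contDiff_ph (ν := ν) (d := d) hp hu hsupp hε
  have hph2 := hcs_ph (ν := ν) (d := d) (ε := ε) hp hcu
  have hPc : ∀ i : Fin n, ContDiff ℝ 1 (fun η => Av ν i η * ph ν d p u ε η) :=
    fun i => (contDiff_Av ν i).mul hph1
  have hQc : ∀ i : Fin n, ContDiff ℝ 1 (fun η => Bv ν i η * ph ν d p u ε η) :=
    fun i => (contDiff_Bv ν i).mul hph1
  have hRc : ContDiff ℝ 1 (fun η => Zc ν η * ph ν d p u ε η) := (contDiff_Zc ν).mul hph1
  have hPs : ∀ i : Fin n, HasCompactSupport (fun η => Av ν i η * ph ν d p u ε η) :=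
    fun i => hph2.mul_left
  have hQs : ∀ i : Fin n, HasCompactSupport (fun η => Bv ν i η * ph ν d p u ε η) :=
    fun i => hph2.mul_left
  have hRs : HasCompactSupport (fun η => Zc ν η * ph ν d p u ε η) := hph2.mul_left
  have he : (fun ξ => fderiv ℝ (ph ν d p u ε) ξ (Zw ν ξ)) = fun ξ =>
      ((∑ i, fderiv ℝ (fun η => Av ν i η * ph ν d p u ε η) ξ (ex i)) +
        (∑ i, fderiv ℝ (fun η => Bv ν i η * ph ν d p u ε η) ξ (ey i))) +
        fderiv ℝ (fun η => Zc ν η * ph ν d p u ε η) ξ et :=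
    funext fun ξ => (div_identity hp hu hsupp hε ξ).symm
  rw [he]
  have hi1 : Integrable (fun ξ => ∑ i, fderiv ℝ (fun η => Av ν i η * ph ν d p u ε η) ξ (ex i)) :=
    integrable_finset_sum _ fun i _ => fd_integrable (hPc i) (hPs i) (ex i)
  have hi2 : Integrable (fun ξ => ∑ i, fderiv ℝ (fun η => Bv ν i η * ph ν d p u ε η) ξ (ey i)) :=
    integrable_finset_sum _ fun i _ => fd_integrable (hQc i) (hQs i) (ey i)
  have hi3 : Integrable (fun ξ => fderiv ℝ (fun η => Zc ν η * ph ν d p u ε η) ξ et) :=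
    fd_integrable hRc hRs et
  have hi12 : Integrable (fun ξ =>
      (∑ i, fderiv ℝ (fun η => Av ν i η * ph ν d p u ε η) ξ (ex i)) +
      (∑ i, fderiv ℝ (fun η => Bv ν i η * ph ν d p u ε η) ξ (ey i))) := hi1.add hi2
  rw [integral_add hi12 hi3, integral_add hi1 hi2,
    integral_finset_sum _ fun i _ => fd_integrable (hPc i) (hPs i) (ex i),
    integral_finset_sum _ fun i _ => fd_integrable (hQc i) (hQs i) (ey i)]
  simp [ibp (hPc _) (hPs _), ibp (hQc _) (hQs _), ibp hRc hRs]

/-! ### Integrability of the pieces -/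

lemma intO1 {ν : H n} {d p ε : ℝ} {u : H n → ℝ} (hp : 1 < p)
    (hu : ContDiff ℝ (⊤ : ℕ∞) u) (hcu : HasCompactSupport u)
    (hsupp : tsupport u ⊆ {ξ : H n | d < iprod n ξ ν}) (hε : 0 < ε) :
    Integrable (O1 ν d p u ε) := by
  refine integrable_of_vanishing hcu hsupp (fun ξ hξ => ?_) (fun ξ hδ => ?_)
  · simp [O1, u_eq_zero hξ, Real.zero_rpow (by positivity : p ≠ 0)]
  · exact ((cont_th hε).continuousAt).mul
      ((((cont_del ν d).continuousAt.rpow_const (Or.inl (ne_of_gt hδ))).mul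
        ((cont_W2 ν).continuousAt)).mul ((cont_absu_rpow hu (by positivity)).continuousAt))

lemma intO2 {ν : H n} {d p ε : ℝ} {u : H n → ℝ} (hp : 1 < p)
    (hu : ContDiff ℝ (⊤ : ℕ∞) u) (hcu : HasCompactSupport u)
    (hsupp : tsupport u ⊆ {ξ : H n | d < iprod n ξ ν}) (hε : 0 < ε) :
    Integrable (O2 ν d p u ε) := by
  refine integrable_of_vanishing hcu hsupp (fun ξ hξ => ?_) (fun ξ hδ => ?_)
  · simp [O2, Du, u_eq_zero hξ]
  · exact ((cont_th hε).continuousAt).mul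
      (((cont_del ν d).continuousAt.rpow_const (Or.inl (ne_of_gt hδ))).mul
        (((cont_Du hp hu).continuousAt).mul ((cont_Zu hu).continuousAt)))

/-! ### The key integral identity -/

lemma key_identity {ν : H n} {d p ε : ℝ} {u : H n → ℝ} (hp : 1 < p)
    (hu : ContDiff ℝ (⊤ : ℕ∞) u) (hcu : HasCompactSupport u)
    (hsupp : tsupport u ⊆ {ξ : H n | d < iprod n ξ ν}) (hε : 0 < ε) :
    (p - 1) * ∫ ξ, O1 ν d p u ε ξ = ∫ ξ, O2 ν d p u ε ξ := by
  have hzero := int_fderiv_ph_Zw_zero hp hu hcu hsupp hε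
  have hido : (fun ξ => fderiv ℝ (ph ν d p u ε) ξ (Zw ν ξ)) =
      fun ξ => (1 - p) * O1 ν d p u ε ξ + O2 ν d p u ε ξ :=
    funext (fderiv_ph_Zw hp hu hsupp hε)
  rw [hido] at hzero
  rw [integral_add ((intO1 hp hu hcu hsupp hε).const_mul _) (intO2 hp hu hcu hsupp hε),
    integral_const_mul] at hzero
  linarith

/-! ### Cauchy-Schwarz bound -/

lemma Zu_bound {ν : H n} {u : H n → ℝ} (ξ : H n) :
    |Zu ν u ξ| ≤ Real.sqrt (W2 ν ξ) * hNorm n u ξ := by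
  have h1 : Zu ν u ξ = ∑ i, (Av ν i ξ * XD n i u ξ + Bv ν i ξ * YD n i u ξ) :=
    clm_Zw_XY ν ξ (fderiv ℝ u ξ)
  have hcs := Finset.sum_mul_sq_le_sq_mul_sq Finset.univ
    (Sum.elim (fun i => Av ν i ξ) (fun i => Bv ν i ξ))
    (Sum.elim (fun i => XD n i u ξ) (fun i => YD n i u ξ))
  simp only [Fintype.sum_sum_type, Sum.elim_inl, Sum.elim_inr] at hcs
  have h2 : (∑ i, (Av ν i ξ * XD n i u ξ + Bv ν i ξ * YD n i u ξ)) ^ 2 ≤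
      W2 ν ξ * ∑ i, (XD n i u ξ ^ 2 + YD n i u ξ ^ 2) := by
    rw [W2, Finset.sum_add_distrib, Finset.sum_add_distrib, Finset.sum_add_distrib]
    exact hcs
  have h3 : (0:ℝ) ≤ ∑ i, (XD n i u ξ ^ 2 + YD n i u ξ ^ 2) :=
    Finset.sum_nonneg fun i _ => by positivity
  calc |Zu ν u ξ| = Real.sqrt ((∑ i, (Av ν i ξ * XD n i u ξ + Bv ν i ξ * YD n i u ξ)) ^ 2) := by
        rw [h1, Real.sqrt_sq_eq_abs]
    _ ≤ Real.sqrt (W2 ν ξ * ∑ i, (XD n i u ξ ^ 2 + YD n i u ξ ^ 2)) := Real.sqrt_le_sqrt h2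
    _ = Real.sqrt (W2 ν ξ) * hNorm n u ξ := by
        rw [Real.sqrt_mul (W2_nonneg ν ξ), hNorm]

/-! ### Pointwise bound `O2 ≤ p · FF · hNorm` -/

lemma FF_zero {ν : H n} {d p ε : ℝ} {u : H n → ℝ} (hp : 1 < p) {ξ : H n}
    (h : ξ ∉ tsupport u) : FF ν d p u ε ξ = 0 := by
  simp [FF, u_eq_zero h, Real.zero_rpow (ne_of_gt (by linarith : (0:ℝ) < p - 1))]

lemma O2_le {ν : H n} {d p ε : ℝ} {u : H n → ℝ} (hp : 1 < p)
    (hsupp : tsupport u ⊆ {ξ : H n | d < iprod n ξ ν}) (hε : 0 < ε) (ξ : H n) :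
    O2 ν d p u ε ξ ≤ p * (FF ν d p u ε ξ * hNorm n u ξ) := by
  by_cases hξ : ξ ∈ tsupport u
  · have hδ : 0 < del ν d ξ := del_pos_of_mem hsupp hξ
    have h1 : Du p u ξ * Zu ν u ξ ≤
        (p * |u ξ| ^ (p - 1)) * (Real.sqrt (W2 ν ξ) * hNorm n u ξ) := by
      calc Du p u ξ * Zu ν u ξ ≤ |Du p u ξ * Zu ν u ξ| := le_abs_self _
        _ = |Du p u ξ| * |Zu ν u ξ| := abs_mul _ _
        _ ≤ (p * |u ξ| ^ (p - 1)) * (Real.sqrt (W2 ν ξ) * hNorm n u ξ) := by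
            refine mul_le_mul (le_of_eq ?_) (Zu_bound ξ) (abs_nonneg _) ?_
            · exact abs_absp_deriv hp (u ξ)
            · exact mul_nonneg (by linarith) (Real.rpow_nonneg (abs_nonneg _) _)
    have hth : 0 ≤ th ν p ε ξ := (th_pos hε ξ).le
    have hdl : 0 ≤ del ν d ξ ^ (1 - p) := Real.rpow_nonneg hδ.le _
    calc O2 ν d p u ε ξ
        = th ν p ε ξ * (del ν d ξ ^ (1 - p) * (Du p u ξ * Zu ν u ξ)) := rfl
      _ ≤ th ν p ε ξ * (del ν d ξ ^ (1 - p) *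
            ((p * |u ξ| ^ (p - 1)) * (Real.sqrt (W2 ν ξ) * hNorm n u ξ))) := by
          exact mul_le_mul_of_nonneg_left (mul_le_mul_of_nonneg_left h1 hdl) hth
      _ = p * (FF ν d p u ε ξ * hNorm n u ξ) := by rw [FF]; ring
  · have h1 : O2 ν d p u ε ξ = 0 := by simp [O2, Du, u_eq_zero hξ]
    rw [h1, FF_zero hp hξ]
    simp

lemma cont_FF {ν : H n} {d p ε : ℝ} {u : H n → ℝ} (hp : 1 < p)
    (hu : ContDiff ℝ (⊤ : ℕ∞) u)
    (hsupp : tsupport u ⊆ {ξ : H n | d < iprod n ξ ν}) (hε : 0 < ε) :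
    Continuous (FF ν d p u ε) := by
  refine cont_of_vanishing hsupp (fun ξ hξ => FF_zero hp hξ) (fun ξ hδ => ?_)
  exact ((((cont_th hε).continuousAt).mul
    ((cont_del ν d).continuousAt.rpow_const (Or.inl (ne_of_gt hδ)))).mul
    ((cont_absu_rpow hu (by linarith : (0:ℝ) ≤ p - 1)).continuousAt)).mul
    ((Real.continuous_sqrt.comp (cont_W2 ν)).continuousAt)

lemma hcs_FF {ν : H n} {d p ε : ℝ} {u : H n → ℝ} (hp : 1 < p)
    (hcu : HasCompactSupport u) : HasCompactSupport (FF ν d p u ε) :=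
  cps_of_vanishing hcu fun _ h => FF_zero hp h

lemma FF_nonneg {ν : H n} {d p ε : ℝ} {u : H n → ℝ} (hp : 1 < p)
    (hsupp : tsupport u ⊆ {ξ : H n | d < iprod n ξ ν}) (hε : 0 < ε) (ξ : H n) :
    0 ≤ FF ν d p u ε ξ := by
  by_cases hξ : ξ ∈ tsupport u
  · have hδ : 0 < del ν d ξ := del_pos_of_mem hsupp hξ
    exact mul_nonneg (mul_nonneg (mul_nonneg (th_pos hε ξ).le
      (Real.rpow_nonneg hδ.le _)) (Real.rpow_nonneg (abs_nonneg _) _)) (Real.sqrt_nonneg _)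
  · rw [FF_zero hp hξ]

lemma int_FFh {ν : H n} {d p ε : ℝ} {u : H n → ℝ} (hp : 1 < p)
    (hu : ContDiff ℝ (⊤ : ℕ∞) u) (hcu : HasCompactSupport u)
    (hsupp : tsupport u ⊆ {ξ : H n | d < iprod n ξ ν}) (hε : 0 < ε) :
    Integrable (fun ξ => FF ν d p u ε ξ * hNorm n u ξ) :=
  ((cont_FF hp hu hsupp hε).mul (cont_hNorm hu)).integrable_of_hasCompactSupport
    ((hcs_FF hp hcu).mul_right)

lemma M2 {ν : H n} {d p ε : ℝ} {u : H n → ℝ} (hp : 1 < p)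
    (hu : ContDiff ℝ (⊤ : ℕ∞) u) (hcu : HasCompactSupport u)
    (hsupp : tsupport u ⊆ {ξ : H n | d < iprod n ξ ν}) (hε : 0 < ε) :
    ∫ ξ, O2 ν d p u ε ξ ≤ p * ∫ ξ, FF ν d p u ε ξ * hNorm n u ξ := by
  have h := integral_mono (intO2 hp hu hcu hsupp hε)
    ((int_FFh hp hu hcu hsupp hε).const_mul p) (O2_le hp hsupp hε)
  rwa [integral_const_mul] at h

/-! ### Hölder -/

lemma conj_exp {p : ℝ} (hp : 1 < p) : (p / (p - 1)).HolderConjugate p := by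
  exact (Real.HolderConjugate.conjExponent hp).symm

lemma hcs_hNorm {u : H n → ℝ} (hcu : HasCompactSupport u) : HasCompactSupport (hNorm n u) :=
  cps_of_vanishing hcu fun _ h => hNorm_zero h

lemma M3 {ν : H n} {d p ε : ℝ} {u : H n → ℝ} (hp : 1 < p)
    (hu : ContDiff ℝ (⊤ : ℕ∞) u) (hcu : HasCompactSupport u)
    (hsupp : tsupport u ⊆ {ξ : H n | d < iprod n ξ ν}) (hε : 0 < ε) :
    ∫ ξ, FF ν d p u ε ξ * hNorm n u ξ ≤
      (∫ ξ, FF ν d p u ε ξ ^ (p / (p - 1))) ^ (1 / (p / (p - 1))) *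
        (∫ ξ, hNorm n u ξ ^ p) ^ (1 / p) := by
  refine integral_mul_le_Lp_mul_Lq_of_nonneg (conj_exp hp)
    (Filter.Eventually.of_forall (FF_nonneg hp hsupp hε))
    (Filter.Eventually.of_forall (hNorm_nonneg u)) ?_ ?_
  · exact (cont_FF hp hu hsupp hε).memLp_of_hasCompactSupport (hcs_FF hp hcu)
  · exact (cont_hNorm hu).memLp_of_hasCompactSupport (hcs_hNorm hcu)

/-! ### Algebraic identities for the limit -/

lemma TT_eq {ν : H n} {d p : ℝ} {u : H n → ℝ} {ξ : H n} (hδ : 0 < del ν d ξ) :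
    TT ν d p u ξ = W2 ν ξ ^ (p / 2) * (del ν d ξ ^ (-p) * |u ξ| ^ p) := by
  rw [TT, Real.sqrt_eq_rpow, ← Real.rpow_mul (W2_nonneg ν ξ),
    show (1:ℝ) / 2 * p = p / 2 by ring, Real.rpow_neg hδ.le, div_eq_mul_inv]
  ring

lemma base1_eq {p : ℝ} (hp : 1 < p) {w : ℝ} (hw : 0 ≤ w) :
    w ^ ((p - 2) / 2) * w = w ^ (p / 2) := by
  rcases eq_or_lt_of_le hw with h0 | hpos
  · rw [← h0]
    rw [Real.zero_rpow (ne_of_gt (by linarith : (0:ℝ) < p / 2)), mul_zero]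
  · rw [show w ^ ((p - 2) / 2) * w = w ^ ((p - 2) / 2) * w ^ (1:ℝ) by rw [Real.rpow_one],
      ← Real.rpow_add hpos]
    congr 1
    ring

lemma TT_zero_off {ν : H n} {d p : ℝ} {u : H n → ℝ} (hp : 1 < p)
    (hsupp : tsupport u ⊆ {ξ : H n | d < iprod n ξ ν}) {ξ : H n}
    (hξ : ξ ∉ {ξ : H n | d < iprod n ξ ν}) : TT ν d p u ξ = 0 := by
  have hδ : del ν d ξ ≤ 0 := by
    simp only [Set.mem_setOf_eq, not_lt] at hξ
    simp [del]; linarith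
  rcases eq_or_lt_of_le hδ with h0 | hneg
  · rw [TT, h0, Real.zero_rpow (by positivity : p ≠ 0), div_zero, zero_mul]
  · have hξ' : ξ ∉ tsupport u := fun hm => absurd (del_pos_of_mem hsupp hm) (by linarith)
    simp [TT, u_eq_zero hξ', Real.zero_rpow (by positivity : p ≠ 0)]

lemma TT_nonneg {ν : H n} {d p : ℝ} {u : H n → ℝ} (hp : 1 < p)
    (hsupp : tsupport u ⊆ {ξ : H n | d < iprod n ξ ν}) (ξ : H n) :
    0 ≤ TT ν d p u ξ := by
  by_cases hξ : ξ ∈ {ξ : H n | d < iprod n ξ ν}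
  · have hδ : 0 < del ν d ξ := sub_pos.2 hξ
    rw [TT_eq hδ]
    exact mul_nonneg (Real.rpow_nonneg (W2_nonneg ν ξ) _)
      (mul_nonneg (Real.rpow_nonneg hδ.le _) (Real.rpow_nonneg (abs_nonneg _) _))
  · rw [TT_zero_off hp hsupp hξ]

/-! ### Uniform bounds for dominated convergence -/

lemma bound_int {ν : H n} {d p : ℝ} {u : H n → ℝ} (hp : 1 < p)
    (hu : ContDiff ℝ (⊤ : ℕ∞) u) (hcu : HasCompactSupport u)
    (hsupp : tsupport u ⊆ {ξ : H n | d < iprod n ξ ν}) :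
    Integrable (fun ξ => (W2 ν ξ + 1) ^ (p/2) * (del ν d ξ ^ (-p) * |u ξ| ^ p)) := by
  refine integrable_of_vanishing hcu hsupp (fun ξ hξ => ?_) (fun ξ hδ => ?_)
  · simp [u_eq_zero hξ, Real.zero_rpow (by positivity : p ≠ 0)]
  · exact (((cont_W2 ν).add continuous_const).continuousAt.rpow_const
      (Or.inl (ne_of_gt (by have := W2_nonneg ν ξ; show 0 < W2 ν ξ + 1; linarith)))).mul
      (((cont_del ν d).continuousAt.rpow_const (Or.inl (ne_of_gt hδ))).mul
        ((cont_absu_rpow hu (by positivity)).continuousAt))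

lemma th_bound {ν : H n} {p ε : ℝ} (hp : 1 < p) (hε : 0 < ε) (hε1 : ε ≤ 1) (ξ : H n) :
    th ν p ε ξ * W2 ν ξ ≤ (W2 ν ξ + 1) ^ (p/2) := by
  have hW := W2_nonneg ν ξ
  have h1 : th ν p ε ξ * W2 ν ξ ≤ th ν p ε ξ * (W2 ν ξ + ε) :=
    mul_le_mul_of_nonneg_left (by linarith) (th_pos hε ξ).le
  have h2 : th ν p ε ξ * (W2 ν ξ + ε) = (W2 ν ξ + ε) ^ (p/2) :=
    base1_eq hp (by linarith)
  have h3 : (W2 ν ξ + ε) ^ (p/2) ≤ (W2 ν ξ + 1) ^ (p/2) :=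
    Real.rpow_le_rpow (by linarith) (by linarith) (by linarith)
  linarith

lemma O1_bound {ν : H n} {d p ε : ℝ} {u : H n → ℝ} (hp : 1 < p)
    (hsupp : tsupport u ⊆ {ξ : H n | d < iprod n ξ ν}) (hε : 0 < ε) (hε1 : ε ≤ 1) (ξ : H n) :
    ‖O1 ν d p u ε ξ‖ ≤ (W2 ν ξ + 1) ^ (p/2) * (del ν d ξ ^ (-p) * |u ξ| ^ p) := by
  by_cases hξ : ξ ∈ tsupport u
  · have hδ := del_pos_of_mem hsupp hξ
    have hnn : 0 ≤ O1 ν d p u ε ξ :=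
      mul_nonneg (th_pos hε ξ).le (mul_nonneg (mul_nonneg (Real.rpow_nonneg hδ.le _)
        (W2_nonneg ν ξ)) (Real.rpow_nonneg (abs_nonneg _) _))
    rw [Real.norm_eq_abs, abs_of_nonneg hnn]
    have hc : 0 ≤ del ν d ξ ^ (-p) * |u ξ| ^ p :=
      mul_nonneg (Real.rpow_nonneg hδ.le _) (Real.rpow_nonneg (abs_nonneg _) _)
    calc O1 ν d p u ε ξ = (th ν p ε ξ * W2 ν ξ) * (del ν d ξ ^ (-p) * |u ξ| ^ p) := by
          rw [O1]; ring
      _ ≤ (W2 ν ξ + 1) ^ (p/2) * (del ν d ξ ^ (-p) * |u ξ| ^ p) :=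
          mul_le_mul_of_nonneg_right (th_bound hp hε hε1 ξ) hc
  · simp [O1, u_eq_zero hξ, Real.zero_rpow (by positivity : p ≠ 0)]

lemma FF_pow_q {ν : H n} {d p ε : ℝ} {u : H n → ℝ} (hp : 1 < p) {ξ : H n}
    (hδ : 0 < del ν d ξ) (hε : 0 < ε) :
    FF ν d p u ε ξ ^ (p/(p-1)) =
      (th ν p ε ξ * Real.sqrt (W2 ν ξ)) ^ (p/(p-1)) * (del ν d ξ ^ (-p) * |u ξ| ^ p) := by
  have hp1 : p - 1 ≠ 0 := ne_of_gt (by linarith)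
  have hq1 : ((1:ℝ) - p) * (p/(p-1)) = -p := by field_simp; ring
  have hq2 : ((p:ℝ) - 1) * (p/(p-1)) = p := by field_simp
  have hths : 0 ≤ th ν p ε ξ * Real.sqrt (W2 ν ξ) :=
    mul_nonneg (th_pos hε ξ).le (Real.sqrt_nonneg _)
  have hdlm : 0 ≤ del ν d ξ ^ (1-p) * |u ξ| ^ (p-1) :=
    mul_nonneg (Real.rpow_nonneg hδ.le _) (Real.rpow_nonneg (abs_nonneg _) _)
  rw [FF, show th ν p ε ξ * del ν d ξ ^ (1 - p) * |u ξ| ^ (p - 1) * Real.sqrt (W2 ν ξ) =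
    (th ν p ε ξ * Real.sqrt (W2 ν ξ)) * (del ν d ξ ^ (1-p) * |u ξ| ^ (p-1)) by ring,
    Real.mul_rpow hths hdlm,
    Real.mul_rpow (Real.rpow_nonneg hδ.le _) (Real.rpow_nonneg (abs_nonneg _) _),
    ← Real.rpow_mul hδ.le, ← Real.rpow_mul (abs_nonneg _), hq1, hq2]

lemma ths_bound {ν : H n} {p ε : ℝ} (hp : 1 < p) (hε : 0 < ε) (ξ : H n) :
    th ν p ε ξ * Real.sqrt (W2 ν ξ) ≤ (W2 ν ξ + ε) ^ ((p-1)/2) := by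
  have hW := W2_nonneg ν ξ
  have h1 : Real.sqrt (W2 ν ξ) ≤ (W2 ν ξ + ε) ^ ((1:ℝ)/2) := by
    rw [Real.sqrt_eq_rpow]
    exact Real.rpow_le_rpow hW (by linarith) (by norm_num)
  calc th ν p ε ξ * Real.sqrt (W2 ν ξ) ≤ th ν p ε ξ * (W2 ν ξ + ε) ^ ((1:ℝ)/2) :=
        mul_le_mul_of_nonneg_left h1 (th_pos hε ξ).le
    _ = (W2 ν ξ + ε) ^ ((p-1)/2) := by
        rw [th, ← Real.rpow_add (by linarith : (0:ℝ) < W2 ν ξ + ε)]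
        congr 1
        ring

lemma FFq_bound {ν : H n} {d p ε : ℝ} {u : H n → ℝ} (hp : 1 < p)
    (hsupp : tsupport u ⊆ {ξ : H n | d < iprod n ξ ν}) (hε : 0 < ε) (hε1 : ε ≤ 1) (ξ : H n) :
    ‖FF ν d p u ε ξ ^ (p/(p-1))‖ ≤ (W2 ν ξ + 1) ^ (p/2) * (del ν d ξ ^ (-p) * |u ξ| ^ p) := by
  have hq0 : (0:ℝ) ≤ p/(p-1) := le_of_lt (div_pos (by linarith : (0:ℝ) < p) (by linarith : (0:ℝ) < p - 1))
  by_cases hξ : ξ ∈ tsupport u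
  · have hδ := del_pos_of_mem hsupp hξ
    have hW := W2_nonneg ν ξ
    rw [Real.norm_eq_abs, abs_of_nonneg (Real.rpow_nonneg (FF_nonneg hp hsupp hε ξ) _),
      FF_pow_q hp hδ hε]
    have hc : 0 ≤ del ν d ξ ^ (-p) * |u ξ| ^ p :=
      mul_nonneg (Real.rpow_nonneg hδ.le _) (Real.rpow_nonneg (abs_nonneg _) _)
    refine mul_le_mul_of_nonneg_right ?_ hc
    have h1 : (th ν p ε ξ * Real.sqrt (W2 ν ξ)) ^ (p/(p-1)) ≤
        ((W2 ν ξ + ε) ^ ((p-1)/2)) ^ (p/(p-1)) :=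
      Real.rpow_le_rpow (mul_nonneg (th_pos hε ξ).le (Real.sqrt_nonneg _))
        (ths_bound hp hε ξ) hq0
    have h2 : ((W2 ν ξ + ε) ^ ((p-1)/2)) ^ (p/(p-1)) = (W2 ν ξ + ε) ^ (p/2) := by
      have hp1 : p - 1 ≠ 0 := sub_ne_zero.mpr (ne_of_gt hp)
      rw [← Real.rpow_mul (by linarith : (0:ℝ) ≤ W2 ν ξ + ε)]
      congr 1
      field_simp
    have h3 : (W2 ν ξ + ε) ^ (p/2) ≤ (W2 ν ξ + 1) ^ (p/2) :=
      Real.rpow_le_rpow (by linarith) (by linarith) (by linarith)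
    linarith
  · rw [FF_zero hp hξ, Real.zero_rpow (ne_of_gt (div_pos (by linarith : (0:ℝ) < p) (by linarith : (0:ℝ) < p - 1)))]
    simp [u_eq_zero hξ, Real.zero_rpow (by positivity : p ≠ 0)]

/-! ### Limits -/

lemma seq_pos (k : ℕ) : (0:ℝ) < 1/(k+1) := by positivity

lemma seq_le (k : ℕ) : (1:ℝ)/(k+1) ≤ 1 := by
  rw [div_le_one (by positivity)]
  linarith [Nat.cast_nonneg (α := ℝ) k]

lemma th_tendsto {ν : H n} {p : ℝ} {ξ : H n} (hW : W2 ν ξ ≠ 0) :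
    Tendsto (fun k : ℕ => th ν p (1/(k+1)) ξ) atTop (𝓝 (W2 ν ξ ^ ((p-2)/2))) := by
  have h1 : Tendsto (fun k : ℕ => W2 ν ξ + 1/(k+1)) atTop (𝓝 (W2 ν ξ)) := by
    have h2 := tendsto_const_nhds (x := W2 ν ξ) (f := atTop (α := ℕ))
    have := h2.add tendsto_one_div_add_atTop_nhds_zero_nat
    simpa using this
  exact (Real.continuousAt_rpow_const _ _ (Or.inl hW)).tendsto.comp h1

lemma TT_zero_u {ν : H n} {d p : ℝ} {u : H n → ℝ} (hp : 1 < p) {ξ : H n}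
    (hξ : ξ ∉ tsupport u) : TT ν d p u ξ = 0 := by
  simp [TT, u_eq_zero hξ, Real.zero_rpow (by positivity : p ≠ 0)]

lemma tendsto_O1 {ν : H n} {d p : ℝ} {u : H n → ℝ} (hp : 1 < p)
    (hu : ContDiff ℝ (⊤ : ℕ∞) u) (hcu : HasCompactSupport u)
    (hsupp : tsupport u ⊆ {ξ : H n | d < iprod n ξ ν}) :
    Tendsto (fun k : ℕ => ∫ ξ, O1 ν d p u (1/(k+1)) ξ) atTop
      (𝓝 (∫ ξ, TT ν d p u ξ)) := by
  refine tendsto_integral_of_dominated_convergence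
    (fun ξ => (W2 ν ξ + 1) ^ (p/2) * (del ν d ξ ^ (-p) * |u ξ| ^ p))
    (fun k => (intO1 hp hu hcu hsupp (seq_pos k)).aestronglyMeasurable)
    (bound_int hp hu hcu hsupp)
    (fun k => Filter.Eventually.of_forall (O1_bound hp hsupp (seq_pos k) (seq_le k)))
    (Filter.Eventually.of_forall ?_)
  intro ξ
  by_cases hξ : ξ ∈ tsupport u
  · have hδ := del_pos_of_mem hsupp hξ
    by_cases hW : W2 ν ξ = 0
    · have h1 : ∀ k : ℕ, O1 ν d p u (1/(k+1)) ξ = 0 := fun k => by simp [O1, hW]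
      have h2 : TT ν d p u ξ = 0 := by
        rw [TT_eq hδ, hW, Real.zero_rpow (by positivity : p/2 ≠ 0), zero_mul]
      simp only [h1, h2]
      exact tendsto_const_nhds
    · have h3 := (th_tendsto (p := p) hW).mul_const
        (del ν d ξ ^ (-p) * W2 ν ξ * |u ξ| ^ p)
      have h4 : W2 ν ξ ^ ((p-2)/2) * (del ν d ξ ^ (-p) * W2 ν ξ * |u ξ| ^ p) =
          TT ν d p u ξ := by
        rw [TT_eq hδ, ← base1_eq hp (W2_nonneg ν ξ)]
        ring
      simp only [O1]
      rw [← h4]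
      exact h3
  · have h1 : ∀ k : ℕ, O1 ν d p u (1/(k+1)) ξ = 0 := fun k => by
      simp [O1, u_eq_zero hξ, Real.zero_rpow (by positivity : p ≠ 0)]
    simp only [h1, TT_zero_u hp hξ]
    exact tendsto_const_nhds

lemma tendsto_FFq {ν : H n} {d p : ℝ} {u : H n → ℝ} (hp : 1 < p)
    (hu : ContDiff ℝ (⊤ : ℕ∞) u) (hcu : HasCompactSupport u)
    (hsupp : tsupport u ⊆ {ξ : H n | d < iprod n ξ ν}) :
    Tendsto (fun k : ℕ => ∫ ξ, FF ν d p u (1/(k+1)) ξ ^ (p/(p-1))) atTop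
      (𝓝 (∫ ξ, TT ν d p u ξ)) := by
  have hq0 : (0:ℝ) ≤ p/(p-1) := le_of_lt (div_pos (by linarith : (0:ℝ) < p) (by linarith : (0:ℝ) < p - 1))
  refine tendsto_integral_of_dominated_convergence
    (fun ξ => (W2 ν ξ + 1) ^ (p/2) * (del ν d ξ ^ (-p) * |u ξ| ^ p))
    (fun k => (((cont_FF hp hu hsupp (seq_pos k)).rpow_const
      (fun _ => Or.inr hq0))).aestronglyMeasurable)
    (bound_int hp hu hcu hsupp)
    (fun k => Filter.Eventually.of_forall (FFq_bound hp hsupp (seq_pos k) (seq_le k)))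
    (Filter.Eventually.of_forall ?_)
  intro ξ
  by_cases hξ : ξ ∈ tsupport u
  · have hδ := del_pos_of_mem hsupp hξ
    have hW := W2_nonneg ν ξ
    have hbase : Tendsto (fun k : ℕ => th ν p (1/(k+1)) ξ * Real.sqrt (W2 ν ξ)) atTop
        (𝓝 (W2 ν ξ ^ ((p-2)/2) * Real.sqrt (W2 ν ξ))) := by
      rcases eq_or_ne (W2 ν ξ) 0 with hW0 | hW0
      · simp only [hW0, Real.sqrt_zero, mul_zero]
        exact tendsto_const_nhds
      · exact (th_tendsto (p := p) hW0).mul_const _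
    have h5 := ((Real.continuousAt_rpow_const
      (W2 ν ξ ^ ((p-2)/2) * Real.sqrt (W2 ν ξ)) (p/(p-1))
      (Or.inr hq0)).tendsto.comp hbase).mul_const (del ν d ξ ^ (-p) * |u ξ| ^ p)
    have h6 : (W2 ν ξ ^ ((p-2)/2) * Real.sqrt (W2 ν ξ)) ^ (p/(p-1)) *
        (del ν d ξ ^ (-p) * |u ξ| ^ p) = TT ν d p u ξ := by
      rcases eq_or_ne (W2 ν ξ) 0 with hW0 | hW0
      · rw [TT_eq hδ]
        simp [hW0, Real.sqrt_zero, Real.zero_rpow (ne_of_gt (div_pos (by linarith : (0:ℝ) < p) (by linarith : (0:ℝ) < p - 1))),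
          Real.zero_rpow (ne_of_gt (by linarith : (0:ℝ) < p/2))]
      · have hWpos : 0 < W2 ν ξ := lt_of_le_of_ne hW (Ne.symm hW0)
        have he : W2 ν ξ ^ ((p-2)/2) * Real.sqrt (W2 ν ξ) = W2 ν ξ ^ ((p-1)/2) := by
          rw [Real.sqrt_eq_rpow, ← Real.rpow_add hWpos]
          congr 1
          ring
        have hp1 : p - 1 ≠ 0 := sub_ne_zero.mpr (ne_of_gt hp)
        rw [he, ← Real.rpow_mul hW, show (p-1)/2 * (p/(p-1)) = p/2 by
          field_simp, TT_eq hδ]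
    rw [← h6]
    refine Tendsto.congr (fun k => ?_) h5
    exact (FF_pow_q hp hδ (seq_pos k)).symm
  · have h1 : ∀ k : ℕ, FF ν d p u (1/(k+1)) ξ ^ (p/(p-1)) = 0 := fun k => by
      rw [FF_zero hp hξ, Real.zero_rpow (ne_of_gt (div_pos (by linarith : (0:ℝ) < p) (by linarith : (0:ℝ) < p - 1)))]
    simp only [h1, TT_zero_u hp hξ]
    exact tendsto_const_nhds

end GHH

theorem geometric_hardy_heisenberg (n : ℕ) (ν : H n) (hν : iprod n ν ν = 1) (d : ℝ)
    (p : ℝ) (hp : 1 < p) (u : H n → ℝ)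
    (hu : ContDiff ℝ (⊤ : ℕ∞) u) (hc : HasCompactSupport u)
    (hsupp : tsupport u ⊆ {ξ : H n | d < iprod n ξ ν}) :
    ∫ ξ in {ξ : H n | d < iprod n ξ ν}, hNorm n u ξ ^ p ≥
      ((p - 1) / p) ^ p *
        ∫ ξ in {ξ : H n | d < iprod n ξ ν},
          (Real.sqrt (∑ i, ((ν.1 i + 2 * ξ.2.1 i * ν.2.2) ^ 2
              + (ν.2.1 i - 2 * ξ.1 i * ν.2.2) ^ 2))) ^ p
            / (iprod n ξ ν - d) ^ p * |u ξ| ^ p := by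
  have hp0 : (0:ℝ) < p := by linarith
  have hp1 : (0:ℝ) < p - 1 := by linarith
  have hpne : p ≠ 0 := ne_of_gt hp0
  have hKset : ∫ ξ in {ξ : H n | d < iprod n ξ ν}, hNorm n u ξ ^ p
      = ∫ ξ, hNorm n u ξ ^ p := by
    refine setIntegral_eq_integral_of_forall_compl_eq_zero (fun ξ hξ => ?_)
    have hm : ξ ∉ tsupport u := fun h => hξ (hsupp h)
    rw [GHH.hNorm_zero hm, Real.zero_rpow hpne]
  have hTset : ∫ ξ in {ξ : H n | d < iprod n ξ ν},
      (Real.sqrt (∑ i, ((ν.1 i + 2 * ξ.2.1 i * ν.2.2) ^ 2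
        + (ν.2.1 i - 2 * ξ.1 i * ν.2.2) ^ 2))) ^ p
        / (iprod n ξ ν - d) ^ p * |u ξ| ^ p
      = ∫ ξ, GHH.TT ν d p u ξ :=
    setIntegral_eq_integral_of_forall_compl_eq_zero
      (fun ξ hξ => GHH.TT_zero_off hp hsupp hξ)
  rw [ge_iff_le, hTset, hKset]
  have step : ∀ k : ℕ, (p-1) * ∫ ξ, GHH.O1 ν d p u (1/(k+1)) ξ ≤
      p * ((∫ ξ, GHH.FF ν d p u (1/(k+1)) ξ ^ (p/(p-1))) ^ (1/(p/(p-1))) *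
        (∫ ξ, hNorm n u ξ ^ p) ^ (1/p)) := by
    intro k
    have h1 := GHH.key_identity hp hu hc hsupp (GHH.seq_pos k)
    have h2 := GHH.M2 hp hu hc hsupp (GHH.seq_pos k)
    have h3 := GHH.M3 hp hu hc hsupp (GHH.seq_pos k)
    calc (p-1) * ∫ ξ, GHH.O1 ν d p u (1/(k+1)) ξ
        = ∫ ξ, GHH.O2 ν d p u (1/(k+1)) ξ := h1
      _ ≤ p * ∫ ξ, GHH.FF ν d p u (1/(k+1)) ξ * hNorm n u ξ := h2
      _ ≤ p * ((∫ ξ, GHH.FF ν d p u (1/(k+1)) ξ ^ (p/(p-1))) ^ (1/(p/(p-1))) *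
          (∫ ξ, hNorm n u ξ ^ p) ^ (1/p)) := mul_le_mul_of_nonneg_left h3 hp0.le
  have lim1 := (GHH.tendsto_O1 hp hu hc hsupp).const_mul (p-1)
  have lim2 : Filter.Tendsto (fun k : ℕ =>
      p * ((∫ ξ, GHH.FF ν d p u (1/(k+1)) ξ ^ (p/(p-1))) ^ (1/(p/(p-1))) *
        (∫ ξ, hNorm n u ξ ^ p) ^ (1/p))) Filter.atTop
      (nhds (p * ((∫ ξ, GHH.TT ν d p u ξ) ^ (1/(p/(p-1))) *
        (∫ ξ, hNorm n u ξ ^ p) ^ (1/p)))) := by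
    have hq : (0:ℝ) ≤ 1/(p/(p-1)) :=
      le_of_lt (by positivity)
    exact (((GHH.tendsto_FFq hp hu hc hsupp).rpow_const (Or.inr hq)).mul_const
      ((∫ ξ, hNorm n u ξ ^ p) ^ (1/p))).const_mul p
  have key := le_of_tendsto_of_tendsto' lim1 lim2 step
  have hI0 : 0 ≤ ∫ ξ, GHH.TT ν d p u ξ := integral_nonneg (GHH.TT_nonneg hp hsupp)
  have hK0 : 0 ≤ ∫ ξ, hNorm n u ξ ^ p :=
    integral_nonneg fun ξ => Real.rpow_nonneg (GHH.hNorm_nonneg u ξ) p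
  set II := ∫ ξ, GHH.TT ν d p u ξ with hIdef
  set KK := ∫ ξ, hNorm n u ξ ^ p with hKdef
  rcases eq_or_lt_of_le hI0 with h0 | hIpos
  · rw [← h0, mul_zero]
    exact hK0
  · have hq1 : 1/(p/(p-1)) + 1/p = 1 := by field_simp; ring
    have hIq : II ^ (1/(p/(p-1))) * II ^ (1/p) = II := by
      rw [← Real.rpow_add hIpos, hq1, Real.rpow_one]
    have h6 : II^(1/(p/(p-1))) * ((p-1) * II^(1/p)) ≤ II^(1/(p/(p-1))) * (p * KK^(1/p)) := by
      calc II^(1/(p/(p-1))) * ((p-1) * II^(1/p))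
          = (p-1) * (II^(1/(p/(p-1))) * II^(1/p)) := by ring
        _ = (p-1) * II := by rw [hIq]
        _ ≤ p * (II^(1/(p/(p-1))) * KK^(1/p)) := key
        _ = II^(1/(p/(p-1))) * (p * KK^(1/p)) := by ring
    have key2 := le_of_mul_le_mul_left h6 (Real.rpow_pos_of_pos hIpos (1/(p/(p-1))))
    have h7 : ((p-1)/p) * II^(1/p) ≤ KK^(1/p) := by
      rw [div_mul_eq_mul_div, div_le_iff₀ hp0]
      calc (p-1) * II^(1/p) ≤ p * KK^(1/p) := key2
        _ = KK^(1/p) * p := by ring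
    have h8 := Real.rpow_le_rpow
      (mul_nonneg (div_nonneg hp1.le hp0.le) (Real.rpow_nonneg hI0 _)) h7 hp0.le
    rw [Real.mul_rpow (div_nonneg hp1.le hp0.le) (Real.rpow_nonneg hI0 _),
      ← Real.rpow_mul hI0, ← Real.rpow_mul hK0, one_div, inv_mul_cancel₀ hpne,
      Real.rpow_one, Real.rpow_one] at h8
    exact h8
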